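/- Let Γ be a group acting transitively on a set Ω and generated by a finite symmetric set S, and fix ω₀ ∈ Ω. Then the semidirect product S(Γ,Ω) = FSym(Ω) ⋊ Γ is generated by S together with the transpositions { (ω₀ ω₀s) : s ∈ S, ω₀s ≠ ω₀ }. -/

import Mathlib

/-- The group of finitely supported permutations of `Ω`. -/
def FSym (Ω : Type*) : Subgroup (Equiv.Perm Ω) where
  carrier := {σ | {x | σ x ≠ x}.Finite}
  one_mem' := by
    have h : {x : Ω | (1 : Equiv.Perm Ω) x ≠ x} = ∅ := by ext x; simp
    show ({x : Ω | (1 : Equiv.Perm Ω) x ≠ x}).Finite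
    rw [h]; exact Set.finite_empty
  mul_mem' := by
    intro σ τ hσ hτ
    apply (Set.Finite.union hσ hτ).subset
    intro x hx
    by_cases h : τ x = x
    · left
      simpa [Equiv.Perm.mul_apply, h] using hx
    · right; exact h
  inv_mem' := by
    intro σ hσ
    apply hσ.subset
    intro x hx
    simp only [Set.mem_setOf_eq] at hx ⊢
    intro h
    exact hx (σ.injective (by rw [show σ (σ⁻¹ x) = x from σ.apply_symm_apply x, h]))

instance FSym.normal (Ω : Type*) : (FSym Ω).Normal := by
  constructor
  intro σ hσ τ
  show {x | (τ * σ * τ⁻¹ : Equiv.Perm Ω) x ≠ x}.Finite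
  apply (Set.Finite.image τ hσ).subset
  intro x hx
  simp only [Set.mem_setOf_eq, Equiv.Perm.mul_apply] at hx
  refine ⟨τ⁻¹ x, ?_, τ.apply_symm_apply x⟩
  intro h
  exact hx (by rw [h, show τ (τ⁻¹ x) = x from τ.apply_symm_apply x])

/-- The action of `Γ` on `FSym Ω` induced by an action of `Γ` on `Ω`. -/
def fsymConj (Γ Ω : Type*) [Group Γ] [MulAction Γ Ω] : Γ →* MulAut (FSym Ω) :=
  MulAut.conjNormal.comp (MulAction.toPermHom Γ Ω)

/-- The transposition `(a b)` as an element of `FSym Ω`. -/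
def swapF {Ω : Type*} [DecidableEq Ω] (a b : Ω) : FSym Ω :=
  ⟨Equiv.swap a b, by
    apply (Set.Finite.insert a (Set.finite_singleton b)).subset
    intro x hx
    rcases (Equiv.swap_apply_ne_self_iff.mp hx).2 with h | h <;> simp [h]⟩

/-
Let `H` be the subgroup in question. Since `S` generates `Γ`, `H` contains `inr Γ`, so the
permutations `σ` with `inl σ ∈ H` form a subgroup normalised by `Γ`. Conjugating `(ω₀ y•ω₀)` by
`x` gives `(x•ω₀ xy•ω₀)`, and chaining it with `(ω₀ x•ω₀)` gives `(ω₀ xy•ω₀)`; by induction along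
words in `S`, `H` contains `(ω₀ g•ω₀)` for every `g ∈ Γ`. One more conjugation and transitivity
give every transposition, hence all of `FSym Ω`, and `FSym Ω ⋊ Γ = inl (FSym Ω) · inr Γ`.
-/

open Equiv MulAction SemidirectProduct

lemma SemidirectProduct.eq_top_of_inl_mem_of_inr_mem {N G : Type*} [Group N] [Group G]
    {φ : G →* MulAut N} {H : Subgroup (N ⋊[φ] G)} (hN : ∀ n, inl n ∈ H) (hG : ∀ g, inr g ∈ H) :
    H = ⊤ :=
  eq_top_iff.2 fun x _ => inl_left_mul_inr_right x ▸ mul_mem (hN _) (hG _)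

lemma FSym.le_closure_isSwap (Ω : Type*) [DecidableEq Ω] :
    FSym Ω ≤ Subgroup.closure {σ : Perm Ω | σ.IsSwap} := fun _ =>
  mem_closure_isSwap'.2

section PermGroup

variable {Γ Ω : Type*} [Group Γ] [MulAction Γ Ω] [DecidableEq Ω] {K : Subgroup (Perm Ω)}

lemma swap_smul_mem_of_swap_mem (hK : ∀ g : Γ, ∀ σ ∈ K, toPerm g * σ * (toPerm g)⁻¹ ∈ K)
    (g : Γ) {a b : Ω} (h : swap a b ∈ K) : swap (g • a) (g • b) ∈ K := by
  have := hK g _ h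
  rwa [← swap_apply_apply] at this

lemma swap_smul_mem_of_mem_closure (hK : ∀ g : Γ, ∀ σ ∈ K, toPerm g * σ * (toPerm g)⁻¹ ∈ K)
    {S : Set Γ} {ω₀ : Ω} (hS : ∀ s ∈ S, swap ω₀ (s • ω₀) ∈ K) {g : Γ}
    (hg : g ∈ Subgroup.closure S) : swap ω₀ (g • ω₀) ∈ K := by
  induction hg using Subgroup.closure_induction with
  | mem s hs => exact hS s hs
  | one =>
    rw [one_smul, swap_self]
    exact K.one_mem
  | mul x y _ _ hx hy =>
    rw [mul_smul]
    exact SubmonoidClass.swap_mem_trans K hx (swap_smul_mem_of_swap_mem hK x hy)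
  | inv x _ hx =>
    have := swap_smul_mem_of_swap_mem hK x⁻¹ hx
    rwa [inv_smul_smul, swap_comm] at this

lemma closure_isSwap_le_of_isPretransitive [IsPretransitive Γ Ω]
    (hK : ∀ g : Γ, ∀ σ ∈ K, toPerm g * σ * (toPerm g)⁻¹ ∈ K) {ω₀ : Ω}
    (hω₀ : ∀ g : Γ, swap ω₀ (g • ω₀) ∈ K) :
    Subgroup.closure {σ : Perm Ω | σ.IsSwap} ≤ K := by
  rw [Subgroup.closure_le]
  rintro _ ⟨a, b, -, rfl⟩
  obtain ⟨g, rfl⟩ := exists_smul_eq Γ ω₀ a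
  obtain ⟨k, hk⟩ := exists_smul_eq Γ ω₀ (g⁻¹ • b)
  have := swap_smul_mem_of_swap_mem hK g (hω₀ k)
  rwa [hk, smul_inv_smul] at this

end PermGroup

lemma eq_top_of_inr_mem_of_swapF_mem {Γ Ω : Type*} [Group Γ] [MulAction Γ Ω]
    [IsPretransitive Γ Ω] [DecidableEq Ω] {S : Set Γ} (hgen : Subgroup.closure S = ⊤) {ω₀ : Ω}
    {H : Subgroup (FSym Ω ⋊[fsymConj Γ Ω] Γ)} (hSH : ∀ s ∈ S, inr s ∈ H)
    (hswap : ∀ s ∈ S, s • ω₀ ≠ ω₀ → inl (swapF ω₀ (s • ω₀)) ∈ H) : H = ⊤ := by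
  have hinr (g : Γ) : inr g ∈ H :=
    (Subgroup.closure_le (H.comap inr)).2 hSH (hgen ▸ Subgroup.mem_top g)
  let K := (H.comap inl).map (FSym Ω).subtype
  have hK (g : Γ) : ∀ σ ∈ K, toPerm g * σ * (toPerm g)⁻¹ ∈ K := by
    rintro _ ⟨n, hn, rfl⟩
    refine ⟨fsymConj Γ Ω g n, ?_, rfl⟩
    show inl (fsymConj Γ Ω g n) ∈ H
    rw [inl_aut]
    exact mul_mem (mul_mem (hinr g) hn) (hinr g⁻¹)
  have hSK : ∀ s ∈ S, swap ω₀ (s • ω₀) ∈ K := by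
    intro s hs
    by_cases h : s • ω₀ = ω₀
    · rw [h, swap_self]
      exact K.one_mem
    · exact ⟨swapF ω₀ (s • ω₀), hswap s hs h, rfl⟩
  have hFSym : FSym Ω ≤ K := (FSym.le_closure_isSwap Ω).trans <|
    closure_isSwap_le_of_isPretransitive hK fun g =>
      swap_smul_mem_of_mem_closure hK hSK (hgen ▸ Subgroup.mem_top g)
  refine eq_top_of_inl_mem_of_inr_mem (fun n => ?_) hinr
  obtain ⟨m, hm, hmn⟩ := hFSym n.2
  exact Subtype.ext hmn ▸ hm

theorem symEnrichment_generated_general {Γ Ω : Type*} [Group Γ] [MulAction Γ Ω]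
    [MulAction.IsPretransitive Γ Ω] [DecidableEq Ω]
    (S : Set Γ) (hgen : Subgroup.closure S = ⊤)
    (ω₀ : Ω) :
    Subgroup.closure
      ((⇑SemidirectProduct.inr '' S) ∪
        {x : FSym Ω ⋊[fsymConj Γ Ω] Γ | ∃ s ∈ S, s • ω₀ ≠ ω₀ ∧
          x = SemidirectProduct.inl (swapF ω₀ (s • ω₀))}) = ⊤ :=
  eq_top_of_inr_mem_of_swapF_mem hgen
    (fun s hs => Subgroup.subset_closure (Or.inl ⟨s, hs, rfl⟩))
    (fun s hs h => Subgroup.subset_closure (Or.inr ⟨s, hs, h, rfl⟩))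

/-- if `Γ` acts transitively on `Ω` and is generated by the finite
symmetric set `S`, then `S(Γ,Ω) = FSym(Ω) ⋊ Γ` is generated by `S` together with
the transpositions `(ω₀ ω₀s)` for `s ∈ S` with `s•ω₀ ≠ ω₀`. -/
theorem symEnrichment_generated {Γ Ω : Type*} [Group Γ] [MulAction Γ Ω]
    [MulAction.IsPretransitive Γ Ω] [DecidableEq Ω]
    (S : Set Γ) (hSfin : S.Finite) (hSsymm : S⁻¹ = S) (hgen : Subgroup.closure S = ⊤)
    (ω₀ : Ω) :
    Subgroup.closure
      ((⇑SemidirectProduct.inr '' S) ∪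
        {x : FSym Ω ⋊[fsymConj Γ Ω] Γ | ∃ s ∈ S, s • ω₀ ≠ ω₀ ∧
          x = SemidirectProduct.inl (swapF ω₀ (s • ω₀))}) = ⊤ :=
  symEnrichment_generated_general S hgen ω₀
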